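/- Let Ψ be an Orlicz function and a ∈ 𝔻 = {z ∈ ℂ : |z| < 1}. Let D(a) = sup{ |f(a)| : f holomorphic on 𝔻 with ∫_𝔻 Ψ(|f|) d𝒜 ≤ 1 } (the norm of the evaluation functional at a on the unit ball of the Bergman–Orlicz space ℬ^Ψ). Then (1/16)·Ψ⁻¹( 1/(1−|a|)² ) ≤ D(a) ≤ 8·Ψ⁻¹( 1/(1−|a|)² ). -/

import Mathlib

open MeasureTheory

/-- The normalized area measure `𝒜` on the open unit disk `𝔻 ⊆ ℂ`
(planar Lebesgue measure divided by `π`). -/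
noncomputable def bergmanMeasure : Measure ℂ :=
  (ENNReal.ofReal Real.pi)⁻¹ • (volume.restrict (Metric.ball (0 : ℂ) 1))

/-- The norm of the evaluation functional at `a` on the unit ball of the
Bergman–Orlicz space `ℬ^Ψ`. -/
noncomputable def bergmanEvalNorm (Ψ : ℝ → ℝ) (a : ℂ) : ℝ :=
  sSup {x : ℝ | ∃ f : ℂ → ℂ, DifferentiableOn ℂ f (Metric.ball 0 1) ∧
    (∫⁻ z, ENNReal.ofReal (Ψ (‖f z‖)) ∂bergmanMeasure) ≤ 1 ∧
    x = ‖f a‖}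

open Set Metric Real ComplexConjugate
open scoped ENNReal

/-!
Upper bound: for `s = (1 - |a|) / 2` the disk `D(a, s)` lies in `𝔻`. By the mean value property
and Jensen's inequality, `Ψ(|f(a)|)` is at most the average of `Ψ ∘ |f|` over every circle around
`a`, hence over `D(a, s)`; so `π s² Ψ(|f(a)|) ≤ ∫_𝔻 Ψ(|f|) dA ≤ π`, and convexity turns
`Ψ(|f(a)|) ≤ 4 Ψ(c)`, `c = Ψ⁻¹((1 - |a|)⁻²)`, into `|f(a)| ≤ 4c`.

Lower bound: with `k_a(z) = (1 - |a|²) / (1 - ā z)` the function `F = (c / 16) k_a⁴` satisfies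
`F(a) = c / 16` and `|F| ≤ c` on `𝔻`, so `Ψ(|F|) ≤ |F| Ψ(c) / c`. Since `|k_a|⁴` is a constant
times the Jacobian of the injective map `z ↦ z / (1 - ā z)`, whose image lies in the disk of
radius `(1 - |a|)⁻¹`, the area formula bounds `∫_𝔻 |F| dA`.
-/

lemma ConvexOn.map_smul_le {E : Type*} [AddCommGroup E] [Module ℝ E] {s : Set E} {f : E → ℝ}
    (hf : ConvexOn ℝ s f) (h0 : (0 : E) ∈ s) (hf0 : f 0 ≤ 0) {x : E} (hx : x ∈ s) {t : ℝ}
    (ht0 : 0 ≤ t) (ht1 : t ≤ 1) : f (t • x) ≤ t * f x := by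
  have h := hf.2 hx h0 ht0 (sub_nonneg.2 ht1) (add_sub_cancel t 1)
  rw [smul_zero, add_zero, smul_eq_mul, smul_eq_mul] at h
  nlinarith

lemma ConvexOn.mul_map_le_map_mul {f : ℝ → ℝ} (hf : ConvexOn ℝ (Ici 0) f) (hf0 : f 0 ≤ 0)
    {k x : ℝ} (hk : 1 ≤ k) (hx : 0 ≤ x) : k * f x ≤ f (k * x) := by
  have hk0 : 0 < k := one_pos.trans_le hk
  have h := hf.map_smul_le self_mem_Ici hf0 (mem_Ici.2 (mul_nonneg hk0.le hx))
    (inv_nonneg.2 hk0.le) (inv_le_one_of_one_le₀ hk)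
  rw [smul_eq_mul, inv_mul_cancel_left₀ hk0.ne'] at h
  rwa [← le_inv_mul_iff₀ hk0]

lemma norm_circleAverage_le {E : Type*} [NormedAddCommGroup E] [NormedSpace ℝ E]
    (f : ℂ → E) (c : ℂ) (R : ℝ) :
    ‖circleAverage f c R‖ ≤ circleAverage (fun z => ‖f z‖) c R := by
  simp only [circleAverage_def, norm_smul, smul_eq_mul, norm_inv,
    Real.norm_of_nonneg two_pi_pos.le]
  gcongr
  exact intervalIntegral.norm_integral_le_integral_norm two_pi_pos.le

lemma ConvexOn.map_circleAverage_le {s : Set ℝ} {φ : ℝ → ℝ} {g : ℂ → ℝ} {c : ℂ} {R : ℝ}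
    (hφ : ConvexOn ℝ s φ) (hφc : ContinuousOn φ s) (hs : IsClosed s)
    (hgs : ∀ θ, g (circleMap c R θ) ∈ s) (hg : CircleIntegrable g c R)
    (hφg : CircleIntegrable (fun z => φ (g z)) c R) :
    φ (circleAverage g c R) ≤ circleAverage (fun z => φ (g z)) c R := by
  simp only [circleAverage_eq_intervalAverage]
  exact hφ.map_set_average_le hφc hs (by simp) (by simp [ENNReal.mul_eq_top])
    (.of_forall hgs) (intervalIntegrable_iff.1 hg) (intervalIntegrable_iff.1 hφg)

theorem DiffContOnCl.map_norm_le_circleAverage {E : Type*} [NormedAddCommGroup E]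
    [NormedSpace ℂ E] [CompleteSpace E] {f : ℂ → E} {c : ℂ} {R : ℝ} {Ψ : ℝ → ℝ}
    (hf : DiffContOnCl ℂ f (ball c |R|)) (hΨ : ConvexOn ℝ (Ici 0) Ψ)
    (hΨmono : MonotoneOn Ψ (Ici 0)) (hΨc : ContinuousOn Ψ (Ici 0)) :
    Ψ ‖f c‖ ≤ Real.circleAverage (fun z => Ψ ‖f z‖) c R := by
  rcases eq_or_ne R 0 with rfl | hR
  · simp
  have hcont : ContinuousOn (fun z => ‖f z‖) (sphere c |R|) :=
    (hf.continuousOn.mono (closure_ball c (abs_ne_zero.2 hR) ▸ sphere_subset_closedBall)).norm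
  calc Ψ ‖f c‖ = Ψ ‖Real.circleAverage f c R‖ := by rw [hf.circleAverage]
    _ ≤ Ψ (Real.circleAverage (fun z => ‖f z‖) c R) :=
        hΨmono (norm_nonneg _) (circleAverage_nonneg_of_nonneg fun _ _ => norm_nonneg _)
          (norm_circleAverage_le f c R)
    _ ≤ Real.circleAverage (fun z => Ψ ‖f z‖) c R :=
        hΨ.map_circleAverage_le hΨc isClosed_Ici (fun θ => norm_nonneg _)
          hcont.circleIntegrable' (hΨc.comp hcont fun z _ => norm_nonneg _).circleIntegrable'

@[fun_prop]
lemma Complex.continuous_polarCoord_symm : Continuous Complex.polarCoord.symm := by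
  rw [show ⇑Complex.polarCoord.symm =
      fun p : ℝ × ℝ => p.1 * (Real.cos p.2 + Real.sin p.2 * Complex.I)
    from funext Complex.polarCoord_symm_apply]
  fun_prop

lemma lintegral_ball_eq_lintegral_polarCoord (g : ℂ → ℝ≥0∞) (c : ℂ) (s : ℝ) :
    ∫⁻ z in ball c s, g z = ∫⁻ p in Ioo 0 s ×ˢ Ioo (-π) π,
      ENNReal.ofReal p.1 * g (c + Complex.polarCoord.symm p) := by
  have hQ : Ioo 0 s ×ˢ Ioo (-π) π ⊆ polarCoord.target := prod_mono (fun _ h => h.1) subset_rfl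
  have hind : ∀ p ∈ polarCoord.target, ENNReal.ofReal p.1 •
      (ball 0 s).indicator (fun w => g (c + w)) (Complex.polarCoord.symm p) =
      (Ioo 0 s ×ˢ Ioo (-π) π).indicator
        (fun p => ENNReal.ofReal p.1 * g (c + Complex.polarCoord.symm p)) p := by
    rintro p ⟨hp1, hp2⟩
    have hp1 : 0 < p.1 := hp1
    by_cases hps : p.1 < s
    · rw [indicator_of_mem (by simpa [abs_of_pos hp1] using hps),
        indicator_of_mem (show p ∈ Ioo 0 s ×ˢ Ioo (-π) π from ⟨⟨hp1, hps⟩, hp2⟩), smul_eq_mul]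
    · rw [indicator_of_notMem (by simpa [abs_of_pos hp1] using hps),
        indicator_of_notMem (fun h => hps h.1.2), smul_zero]
  calc ∫⁻ z in ball c s, g z = ∫⁻ w, (ball 0 s).indicator (fun w => g (c + w)) w := by
        rw [← lintegral_indicator measurableSet_ball, ← lintegral_add_left_eq_self _ c]
        congr! 1 with w
        simp [indicator, dist_eq_norm]
    _ = ∫⁻ p in Ioo 0 s ×ˢ Ioo (-π) π,
          ENNReal.ofReal p.1 * g (c + Complex.polarCoord.symm p) := by
        rw [← Complex.lintegral_comp_polarCoord_symm,
          setLIntegral_congr_fun polarCoord.open_target.measurableSet hind,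
          setLIntegral_indicator (measurableSet_Ioo.prod measurableSet_Ioo), inter_eq_left.2 hQ]

lemma circleAverage_eq_setIntegral_polarCoord (g : ℂ → ℝ) (c : ℂ) (ρ : ℝ) :
    circleAverage g c ρ =
      (2 * π)⁻¹ * ∫ θ in Ioo (-π) π, g (c + Complex.polarCoord.symm (ρ, θ)) := by
  have hcircle : ∀ θ, circleMap c ρ θ = c + Complex.polarCoord.symm (ρ, θ) := fun θ => by
    simp [circleMap, Complex.exp_mul_I]
  rw [circleAverage_eq_integral_add (-π), smul_eq_mul,
    intervalIntegral.integral_comp_add_right (fun θ => g (circleMap c ρ θ)),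
    intervalIntegral.integral_of_le (by linarith [pi_pos]), integral_Ioc_eq_integral_Ioo]
  simp only [hcircle]
  ring_nf

lemma lintegral_Ioo_ofReal_id {s : ℝ} (hs : 0 ≤ s) :
    ∫⁻ ρ in Ioo 0 s, ENNReal.ofReal ρ = ENNReal.ofReal (s ^ 2 / 2) := by
  have hint : IntegrableOn (fun ρ : ℝ => ρ) (Ioo 0 s) :=
    (continuous_id' (X := ℝ)).integrableOn_Icc.mono_set Ioo_subset_Icc_self
  rw [← ofReal_integral_eq_lintegral_ofReal hint
      ((ae_restrict_iff' measurableSet_Ioo).2 (.of_forall fun ρ h => h.1.le)),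
    ← integral_Ioc_eq_integral_Ioo, ← intervalIntegral.integral_of_le hs, integral_id]
  ring_nf

theorem ofReal_mul_le_lintegral_ball_of_le_circleAverage {G : ℂ → ℝ} {c : ℂ} {s : ℝ}
    (hs : 0 ≤ s) (hG : ContinuousOn G (closedBall c s)) (hG0 : ∀ z ∈ closedBall c s, 0 ≤ G z)
    (hsub : ∀ ρ ∈ Ioo 0 s, G c ≤ circleAverage G c ρ) :
    ENNReal.ofReal (π * s ^ 2 * G c) ≤ ∫⁻ z in ball c s, ENNReal.ofReal (G z) := by
  have hmaps : ∀ ρ ∈ Icc 0 s, MapsTo (fun θ => c + Complex.polarCoord.symm (ρ, θ)) univ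
      (closedBall c s) := fun ρ hρ θ _ => by
    simpa [abs_of_nonneg hρ.1] using hρ.2
  have hcircle : ∀ ρ ∈ Ioo 0 s, ENNReal.ofReal (2 * π * G c) ≤
      ∫⁻ θ in Ioo (-π) π, ENNReal.ofReal (G (c + Complex.polarCoord.symm (ρ, θ))) := by
    intro ρ hρ
    have hcont : Continuous fun θ => G (c + Complex.polarCoord.symm (ρ, θ)) :=
      hG.comp_continuous (by fun_prop) fun θ => hmaps ρ (Ioo_subset_Icc_self hρ) (mem_univ θ)
    rw [← ofReal_integral_eq_lintegral_ofReal
      (hcont.integrableOn_Icc.mono_set Ioo_subset_Icc_self)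
      (.of_forall fun θ => hG0 _ (hmaps ρ (Ioo_subset_Icc_self hρ) (mem_univ θ)))]
    have := hsub ρ hρ
    rw [circleAverage_eq_setIntegral_polarCoord, inv_mul_eq_div, le_div_iff₀ two_pi_pos] at this
    exact ENNReal.ofReal_le_ofReal (by linarith)
  have hmeas : AEMeasurable (fun p : ℝ × ℝ =>
      ENNReal.ofReal p.1 * ENNReal.ofReal (G (c + Complex.polarCoord.symm p)))
      ((volume.prod volume).restrict (Ioo 0 s ×ˢ Ioo (-π) π)) := by
    refine measurable_fst.ennreal_ofReal.aemeasurable.mul (ContinuousOn.aemeasurable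
      (ENNReal.continuous_ofReal.comp_continuousOn (hG.comp (by fun_prop) ?_))
      (measurableSet_Ioo.prod measurableSet_Ioo))
    rintro p ⟨hp, -⟩
    exact hmaps p.1 (Ioo_subset_Icc_self hp) (mem_univ p.2)
  calc ENNReal.ofReal (π * s ^ 2 * G c)
      = ∫⁻ ρ in Ioo 0 s, ENNReal.ofReal ρ * ENNReal.ofReal (2 * π * G c) := by
        rw [lintegral_mul_const' _ _ ENNReal.ofReal_ne_top, lintegral_Ioo_ofReal_id hs,
          ← ENNReal.ofReal_mul (by positivity)]
        ring_nf
    _ ≤ ∫⁻ ρ in Ioo 0 s, ∫⁻ θ in Ioo (-π) π,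
          ENNReal.ofReal ρ * ENNReal.ofReal (G (c + Complex.polarCoord.symm (ρ, θ))) := by
        refine setLIntegral_mono' measurableSet_Ioo fun ρ hρ => ?_
        rw [lintegral_const_mul' _ _ ENNReal.ofReal_ne_top]
        exact mul_le_mul_right (hcircle ρ hρ) _
    _ = ∫⁻ z in ball c s, ENNReal.ofReal (G z) := by
        rw [lintegral_ball_eq_lintegral_polarCoord, Measure.volume_eq_prod,
          setLIntegral_prod _ hmeas]

theorem DifferentiableOn.ofReal_mul_map_norm_le_lintegral_ball {E : Type*}
    [NormedAddCommGroup E] [NormedSpace ℂ E] [CompleteSpace E] {f : ℂ → E} {c : ℂ} {s : ℝ}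
    {Ψ : ℝ → ℝ} (hf : DifferentiableOn ℂ f (closedBall c s)) (hs : 0 ≤ s)
    (hΨ : ConvexOn ℝ (Ici 0) Ψ) (hΨmono : MonotoneOn Ψ (Ici 0)) (hΨc : ContinuousOn Ψ (Ici 0))
    (hΨ0 : 0 ≤ Ψ 0) :
    ENNReal.ofReal (π * s ^ 2 * Ψ ‖f c‖) ≤ ∫⁻ z in ball c s, ENNReal.ofReal (Ψ ‖f z‖) := by
  refine ofReal_mul_le_lintegral_ball_of_le_circleAverage hs
    (hΨc.comp hf.continuousOn.norm fun z _ => norm_nonneg (f z))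
    (fun z _ => hΨ0.trans (hΨmono self_mem_Ici (norm_nonneg (f z)) (norm_nonneg _)))
    fun ρ hρ => (hf.mono ?_).diffContOnCl.map_norm_le_circleAverage hΨ hΨmono hΨc
  rw [abs_of_pos hρ.1, closure_ball c hρ.1.ne']
  exact closedBall_subset_closedBall hρ.2.le

theorem lintegral_norm_deriv_sq_eq_volume_image {f f' : ℂ → ℂ} {s : Set ℂ}
    (hs : MeasurableSet s) (hf : ∀ z ∈ s, HasDerivAt f (f' z) z) (hinj : InjOn f s) :
    ∫⁻ z in s, ENNReal.ofReal (‖f' z‖ ^ 2) = volume (f '' s) := by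
  rw [← setLIntegral_one, lintegral_image_eq_lintegral_abs_det_fderiv_mul volume hs
    (fun z hz => ((hf z hz).hasFDerivAt.restrictScalars ℝ).hasFDerivWithinAt) hinj]
  refine setLIntegral_congr_fun hs fun z _ => ?_
  simp [ContinuousLinearMap.det, LinearMap.det_restrictScalars, Algebra.norm_complex_eq,
    Complex.normSq_eq_norm_sq]

lemma one_sub_norm_le_norm_one_sub_conj_mul (a : ℂ) {z : ℂ} (hz : ‖z‖ ≤ 1) :
    1 - ‖a‖ ≤ ‖1 - conj a * z‖ := by
  have h := norm_sub_norm_le (1 : ℂ) (conj a * z)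
  rw [norm_one, norm_mul, Complex.norm_conj] at h
  nlinarith [norm_nonneg a]

lemma lintegral_ball_inv_norm_one_sub_conj_mul_pow_four_le {a : ℂ} (ha : ‖a‖ < 1) :
    ∫⁻ z in ball (0 : ℂ) 1, ENNReal.ofReal (‖1 - conj a * z‖ ^ 4)⁻¹
      ≤ volume (ball (0 : ℂ) (1 - ‖a‖)⁻¹) := by
  have hden : ∀ z ∈ ball (0 : ℂ) 1, 1 - ‖a‖ ≤ ‖1 - conj a * z‖ := fun z hz =>
    one_sub_norm_le_norm_one_sub_conj_mul a (mem_ball_zero_iff.1 hz).le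
  have hne : ∀ z ∈ ball (0 : ℂ) 1, 1 - conj a * z ≠ 0 := fun z hz h => by
    have := hden z hz
    rw [h, norm_zero] at this
    linarith
  have hderiv : ∀ z ∈ ball (0 : ℂ) 1,
      HasDerivAt (fun w => w / (1 - conj a * w)) ((1 - conj a * z) ^ 2)⁻¹ z := by
    intro z hz
    refine ((hasDerivAt_id' z).div (((hasDerivAt_id' z).const_mul (conj a)).const_sub 1)
      (hne z hz)).congr_deriv ?_
    ring
  have hinj : InjOn (fun w => w / (1 - conj a * w)) (ball (0 : ℂ) 1) := by
    intro z hz w hw h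
    rw [div_eq_div_iff (hne z hz) (hne w hw)] at h
    linear_combination h
  have himage : (fun w => w / (1 - conj a * w)) '' ball (0 : ℂ) 1 ⊆ ball 0 (1 - ‖a‖)⁻¹ := by
    rintro _ ⟨z, hz, rfl⟩
    have hpos : 0 < 1 - ‖a‖ := by linarith
    rw [mem_ball_zero_iff, norm_div, div_lt_iff₀ (hpos.trans_le (hden z hz)), inv_mul_eq_div,
      lt_div_iff₀ hpos]
    nlinarith [hden z hz, norm_nonneg z, mem_ball_zero_iff.1 hz]
  calc ∫⁻ z in ball (0 : ℂ) 1, ENNReal.ofReal (‖1 - conj a * z‖ ^ 4)⁻¹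
      = ∫⁻ z in ball (0 : ℂ) 1, ENNReal.ofReal (‖((1 - conj a * z) ^ 2)⁻¹‖ ^ 2) := by
        congr! 3 with z
        rw [norm_inv, norm_pow, inv_pow, ← pow_mul]
    _ = volume ((fun w => w / (1 - conj a * w)) '' ball (0 : ℂ) 1) :=
        lintegral_norm_deriv_sq_eq_volume_image measurableSet_ball hderiv hinj
    _ ≤ volume (ball (0 : ℂ) (1 - ‖a‖)⁻¹) := measure_mono himage

lemma lintegral_bergmanMeasure_le_one_iff (g : ℂ → ℝ≥0∞) :
    ∫⁻ z, g z ∂bergmanMeasure ≤ 1 ↔ ∫⁻ z in ball (0 : ℂ) 1, g z ≤ ENNReal.ofReal π := by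
  rw [bergmanMeasure, lintegral_smul_measure, smul_eq_mul,
    ENNReal.inv_mul_le_iff (by simp [pi_pos]) ENNReal.ofReal_ne_top, mul_one]

theorem norm_le_of_lintegral_bergmanMeasure_le_one {Ψ : ℝ → ℝ} (hΨ0 : Ψ 0 = 0)
    (hΨmono : StrictMonoOn Ψ (Ici 0)) (hΨ : ConvexOn ℝ (Ici 0) Ψ) (hΨc : ContinuousOn Ψ (Ici 0))
    {a : ℂ} (ha : ‖a‖ < 1) {c : ℝ} (hc : 0 ≤ c) (hΨc1 : Ψ c = 1 / (1 - ‖a‖) ^ 2)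
    {f : ℂ → ℂ} (hf : DifferentiableOn ℂ f (ball 0 1))
    (hfΨ : ∫⁻ z, ENNReal.ofReal (Ψ ‖f z‖) ∂bergmanMeasure ≤ 1) :
    ‖f a‖ ≤ 4 * c := by
  set s := (1 - ‖a‖) / 2 with hs_def
  have hs : 0 < s := by linarith
  have hsub : closedBall a s ⊆ ball 0 1 := fun z hz => by
    rw [mem_ball_zero_iff]
    linarith [norm_le_norm_add_norm_sub' z a, mem_closedBall_iff_norm.1 hz]
  have harea : ENNReal.ofReal (π * s ^ 2 * Ψ ‖f a‖) ≤ ENNReal.ofReal π :=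
    ((hf.mono hsub).ofReal_mul_map_norm_le_lintegral_ball hs.le hΨ hΨmono.monotoneOn hΨc
      hΨ0.ge).trans <| (lintegral_mono_set (ball_subset_closedBall.trans hsub)).trans <|
        (lintegral_bergmanMeasure_le_one_iff _).1 hfΨ
  have hfa : Ψ ‖f a‖ ≤ 4 * Ψ c := by
    rw [ENNReal.ofReal_le_ofReal_iff pi_pos.le, mul_assoc, mul_le_iff_le_one_right pi_pos,
      ← le_div_iff₀' (by positivity)] at harea
    calc Ψ ‖f a‖ ≤ 1 / s ^ 2 := harea
      _ = 4 * Ψ c := by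
          rw [hΨc1, hs_def, div_pow, one_div_div]
          ring
  rw [← hΨmono.le_iff_le (norm_nonneg _) (mul_nonneg zero_le_four hc)]
  exact hfa.trans (hΨ.mul_map_le_map_mul hΨ0.le (by norm_num) hc)

/-- The Szegő kernel `(1 - ā z)⁻¹` of `𝔻`, divided by its value at `z = a`. -/
noncomputable def diskPeak (a z : ℂ) : ℂ := ((1 - ‖a‖ ^ 2 : ℝ) : ℂ) / (1 - conj a * z)

lemma diskPeak_self {a : ℂ} (ha : ‖a‖ < 1) : diskPeak a a = 1 := by
  have h : 1 - conj a * a = ((1 - ‖a‖ ^ 2 : ℝ) : ℂ) := by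
    rw [Complex.conj_mul']
    push_cast
    ring
  rw [diskPeak, h, div_self (Complex.ofReal_ne_zero.2 (by nlinarith [norm_nonneg a]))]

lemma norm_diskPeak_pow_four {a : ℂ} (ha : ‖a‖ < 1) (z : ℂ) :
    ‖diskPeak a z‖ ^ 4 = (1 - ‖a‖ ^ 2) ^ 4 * (‖1 - conj a * z‖ ^ 4)⁻¹ := by
  rw [diskPeak, norm_div, Complex.norm_real, Real.norm_of_nonneg (by nlinarith [norm_nonneg a]),
    div_pow, div_eq_mul_inv]

lemma norm_diskPeak_le {a z : ℂ} (ha : ‖a‖ < 1) (hz : ‖z‖ ≤ 1) : ‖diskPeak a z‖ ≤ 1 + ‖a‖ := by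
  have hden := one_sub_norm_le_norm_one_sub_conj_mul a hz
  have hpos : 0 < 1 - ‖a‖ := by linarith
  rw [diskPeak, norm_div, Complex.norm_real, Real.norm_of_nonneg (by nlinarith [norm_nonneg a]),
    div_le_iff₀ (hpos.trans_le hden)]
  nlinarith [norm_nonneg a]

lemma differentiableOn_diskPeak {a : ℂ} (ha : ‖a‖ < 1) :
    DifferentiableOn ℂ (diskPeak a) (ball 0 1) := by
  refine (differentiableOn_const _).div ((differentiableOn_const 1).sub
    ((differentiableOn_const _).mul differentiableOn_id)) fun z hz h => ?_
  have := one_sub_norm_le_norm_one_sub_conj_mul a (mem_ball_zero_iff.1 hz).le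
  rw [h, norm_zero] at this
  linarith

lemma lintegral_norm_diskPeak_pow_four_le {a : ℂ} (ha : ‖a‖ < 1) :
    ∫⁻ z in ball (0 : ℂ) 1, ENNReal.ofReal (‖diskPeak a z‖ ^ 4)
      ≤ ENNReal.ofReal (π * (1 + ‖a‖) ^ 4 * (1 - ‖a‖) ^ 2) := by
  have hpos : 0 < 1 - ‖a‖ := by linarith
  calc ∫⁻ z in ball (0 : ℂ) 1, ENNReal.ofReal (‖diskPeak a z‖ ^ 4)
      = ENNReal.ofReal ((1 - ‖a‖ ^ 2) ^ 4) *
          ∫⁻ z in ball (0 : ℂ) 1, ENNReal.ofReal (‖1 - conj a * z‖ ^ 4)⁻¹ := by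
        rw [← lintegral_const_mul' _ _ ENNReal.ofReal_ne_top]
        congr! 2 with z
        rw [norm_diskPeak_pow_four ha, ENNReal.ofReal_mul (by positivity)]
    _ ≤ ENNReal.ofReal ((1 - ‖a‖ ^ 2) ^ 4) * volume (ball (0 : ℂ) (1 - ‖a‖)⁻¹) := by
        gcongr
        exact lintegral_ball_inv_norm_one_sub_conj_mul_pow_four_le ha
    _ = ENNReal.ofReal (π * (1 + ‖a‖) ^ 4 * (1 - ‖a‖) ^ 2) := by
        rw [Complex.volume_ball, ← ENNReal.ofReal_pow (by positivity), ← ENNReal.ofReal_coe_nnreal,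
          NNReal.coe_real_pi, ← ENNReal.ofReal_mul (by positivity),
          ← ENNReal.ofReal_mul (by positivity)]
        congr 1
        field_simp
        ring

theorem lintegral_bergmanMeasure_map_norm_smul_diskPeak_pow_four_le_one {Ψ : ℝ → ℝ}
    (hΨ : ConvexOn ℝ (Ici 0) Ψ) (hΨ0 : Ψ 0 = 0) {a : ℂ} (ha : ‖a‖ < 1) {c : ℝ} (hc : 0 < c)
    (hΨc : Ψ c = 1 / (1 - ‖a‖) ^ 2) :
    ∫⁻ z, ENNReal.ofReal (Ψ ‖(c : ℂ) / 16 * diskPeak a z ^ 4‖) ∂bergmanMeasure ≤ 1 := by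
  have hpos : 0 < 1 - ‖a‖ := by linarith
  have hnorm : ∀ z, ‖(c : ℂ) / 16 * diskPeak a z ^ 4‖ = c / 16 * ‖diskPeak a z‖ ^ 4 := fun z => by
    rw [norm_mul, norm_div, Complex.norm_real, Real.norm_of_nonneg hc.le, norm_pow,
      Complex.norm_ofNat]
  -- on `𝔻` the witness stays below `c`, where convexity bounds `Ψ` by the chord from `0`
  have hchord : ∀ z ∈ ball (0 : ℂ) 1,
      Ψ ‖(c : ℂ) / 16 * diskPeak a z ^ 4‖ ≤ Ψ c / 16 * ‖diskPeak a z‖ ^ 4 := by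
    intro z hz
    have hk := norm_diskPeak_le ha (mem_ball_zero_iff.1 hz).le
    have hk4 : ‖diskPeak a z‖ ^ 4 ≤ 16 := by
      calc ‖diskPeak a z‖ ^ 4 ≤ 2 ^ 4 := by gcongr; linarith
        _ = 16 := by norm_num
    have h := hΨ.map_smul_le self_mem_Ici hΨ0.le (mem_Ici.2 hc.le)
      (t := ‖diskPeak a z‖ ^ 4 / 16) (by positivity) (by linarith)
    rw [smul_eq_mul] at h
    rw [hnorm]
    calc Ψ (c / 16 * ‖diskPeak a z‖ ^ 4) = Ψ (‖diskPeak a z‖ ^ 4 / 16 * c) := by ring_nf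
      _ ≤ ‖diskPeak a z‖ ^ 4 / 16 * Ψ c := h
      _ = Ψ c / 16 * ‖diskPeak a z‖ ^ 4 := by ring
  rw [lintegral_bergmanMeasure_le_one_iff]
  calc ∫⁻ z in ball (0 : ℂ) 1, ENNReal.ofReal (Ψ ‖(c : ℂ) / 16 * diskPeak a z ^ 4‖)
      ≤ ∫⁻ z in ball (0 : ℂ) 1,
          ENNReal.ofReal (Ψ c / 16) * ENNReal.ofReal (‖diskPeak a z‖ ^ 4) := by
        refine setLIntegral_mono' measurableSet_ball fun z hz => ?_
        rw [← ENNReal.ofReal_mul (by rw [hΨc]; positivity)]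
        exact ENNReal.ofReal_le_ofReal (hchord z hz)
    _ ≤ ENNReal.ofReal (Ψ c / 16) * ENNReal.ofReal (π * (1 + ‖a‖) ^ 4 * (1 - ‖a‖) ^ 2) := by
        rw [lintegral_const_mul' _ _ ENNReal.ofReal_ne_top]
        gcongr
        exact lintegral_norm_diskPeak_pow_four_le ha
    _ ≤ ENNReal.ofReal π := by
        rw [← ENNReal.ofReal_mul (by rw [hΨc]; positivity)]
        refine ENNReal.ofReal_le_ofReal ?_
        have h16 : (1 + ‖a‖) ^ 4 ≤ 16 := by
          calc (1 + ‖a‖) ^ 4 ≤ 2 ^ 4 := by gcongr; linarith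
            _ = 16 := by norm_num
        calc Ψ c / 16 * (π * (1 + ‖a‖) ^ 4 * (1 - ‖a‖) ^ 2) = π * ((1 + ‖a‖) ^ 4 / 16) := by
              rw [hΨc]
              field_simp
          _ ≤ π * 1 := by gcongr; linarith
          _ = π := mul_one π

theorem stmt_18_general
    (Ψ Ψinv : ℝ → ℝ)
    (hΨ0 : Ψ 0 = 0)
    (hΨmono : StrictMonoOn Ψ (Set.Ici 0))
    (hΨconv : StrictConvexOn ℝ (Set.Ici 0) Ψ)
    (hΨcont : ContinuousOn Ψ (Set.Ici 0))
    (hΨinv2 : ∀ y, 0 ≤ y → Ψ (Ψinv y) = y)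
    (hΨinv0 : ∀ y, 0 ≤ y → 0 ≤ Ψinv y)
    (a : ℂ) (ha : ‖a‖ < 1) :
    (1 / 16) * Ψinv (1 / (1 - ‖a‖) ^ 2) ≤ bergmanEvalNorm Ψ a ∧
    bergmanEvalNorm Ψ a ≤ 8 * Ψinv (1 / (1 - ‖a‖) ^ 2) := by
  have hy : 0 < 1 / (1 - ‖a‖) ^ 2 := one_div_pos.2 (pow_pos (by linarith) 2)
  have hΨc := hΨinv2 _ hy.le
  have hc := hΨinv0 _ hy.le
  generalize Ψinv (1 / (1 - ‖a‖) ^ 2) = c at hΨc hc ⊢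
  replace hc : 0 < c := hc.lt_of_ne' fun h => by
    rw [h, hΨ0] at hΨc
    exact hy.ne hΨc
  have hupper : ∀ x ∈ {x : ℝ | ∃ f : ℂ → ℂ, DifferentiableOn ℂ f (Metric.ball 0 1) ∧
      (∫⁻ z, ENNReal.ofReal (Ψ (‖f z‖)) ∂bergmanMeasure) ≤ 1 ∧ x = ‖f a‖}, x ≤ 8 * c := by
    rintro _ ⟨f, hf, hfΨ, rfl⟩
    linarith [norm_le_of_lintegral_bergmanMeasure_le_one hΨ0 hΨmono hΨconv.convexOn hΨcont ha
      hc.le hΨc hf hfΨ]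
  refine ⟨le_csSup ⟨8 * c, hupper⟩ ⟨fun z => (c : ℂ) / 16 * diskPeak a z ^ 4,
      (differentiableOn_diskPeak ha).pow 4 |>.const_mul _,
      lintegral_bergmanMeasure_map_norm_smul_diskPeak_pow_four_le_one hΨconv.convexOn hΨ0 ha hc hΨc,
      ?_⟩, csSup_le ⟨0, fun _ => 0, differentiableOn_const 0, by simp [hΨ0], by simp⟩ hupper⟩
  dsimp only
  rw [diskPeak_self ha, one_pow, mul_one, norm_div, Complex.norm_real, Real.norm_of_nonneg hc.le,
    Complex.norm_ofNat]
  ring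

theorem stmt_18
    (Ψ Ψinv : ℝ → ℝ)
    (hΨ0 : Ψ 0 = 0)
    (hΨmono : StrictMonoOn Ψ (Set.Ici 0))
    (hΨconv : StrictConvexOn ℝ (Set.Ici 0) Ψ)
    (hΨcont : ContinuousOn Ψ (Set.Ici 0))
    (hΨlim : Filter.Tendsto (fun x => Ψ x / x) Filter.atTop Filter.atTop)
    (hΨinv1 : ∀ x, 0 ≤ x → Ψinv (Ψ x) = x)
    (hΨinv2 : ∀ y, 0 ≤ y → Ψ (Ψinv y) = y)
    (hΨinv0 : ∀ y, 0 ≤ y → 0 ≤ Ψinv y)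
    (a : ℂ) (ha : ‖a‖ < 1) :
    (1 / 16) * Ψinv (1 / (1 - ‖a‖) ^ 2) ≤ bergmanEvalNorm Ψ a ∧
    bergmanEvalNorm Ψ a ≤ 8 * Ψinv (1 / (1 - ‖a‖) ^ 2) :=
  stmt_18_general Ψ Ψinv hΨ0 hΨmono hΨconv hΨcont hΨinv2 hΨinv0 a ha
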